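/- The function φ(x) = tan³x / ( ln tan(x/2 + π/4) + tan x / cos x )² is strictly concave on the open interval (0, π/2). -/

import Mathlib

/-!
Put `t = log tan (x/2 + π/4)`, the inverse Gudermannian function of `x`; then `tan x = sinh t`,
`sec x = cosh t`, and the denominator is `D = t + sinh t cosh t`. From `tan' = sec²`,
`sec' = tan · sec` and `D' = 2 sec³` one gets
`φ'' = 6 tan x sec² x (D - 2 tan x sec x) ((sec² x + tan² x) D - 2 tan x sec³ x) / D⁴`.
In terms of `t` the two factors are `(2t - sinh 2t) / 2 < 0` and `(2t cosh 2t - sinh 2t) / 2 > 0`,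
that is, `tanh w < w < sinh w` for `w = 2t > 0`.
-/

open Real

theorem strictConcaveOn_of_hasDerivAt2_neg {D : Set ℝ} (hD : Convex ℝ D) (hDo : IsOpen D)
    {f f' f'' : ℝ → ℝ} (hf : ∀ x ∈ D, HasDerivAt f (f' x) x)
    (hf' : ∀ x ∈ D, HasDerivAt f' (f'' x) x) (hf'' : ∀ x ∈ D, f'' x < 0) :
    StrictConcaveOn ℝ D f := by
  have hanti : StrictAntiOn f' D :=
    strictAntiOn_of_deriv_neg hD (fun x hx => (hf' x hx).continuousAt.continuousWithinAt)
      fun x hx => by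
        rw [hDo.interior_eq] at hx
        rw [(hf' x hx).deriv]
        exact hf'' x hx
  refine StrictAntiOn.strictConcaveOn_of_deriv hD
    (fun x hx => (hf x hx).continuousAt.continuousWithinAt) ?_
  rw [hDo.interior_eq]
  exact hanti.congr fun x hx => (hf x hx).deriv.symm

theorem sinh_lt_mul_cosh {x : ℝ} (hx : 0 < x) : sinh x < x * cosh x := by
  obtain ⟨c, ⟨hc0, hcx⟩, hc⟩ := exists_hasDerivAt_eq_slope sinh cosh hx
    continuous_sinh.continuousOn fun y _ => hasDerivAt_sinh y
  rw [sinh_zero, sub_zero, sub_zero, eq_div_iff hx.ne'] at hc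
  rw [← hc, mul_comm]
  gcongr
  exact cosh_lt_cosh.2 (by rw [abs_of_pos hc0, abs_of_pos hx]; exact hcx)

theorem tan_div_two_add_pi_div_four (x : ℝ) : tan (x / 2 + π / 4) = (1 + sin x) / cos x := by
  set a := x / 2 + π / 4
  have hx : x = 2 * a - π / 2 := by ring
  rw [hx, sin_sub_pi_div_two, cos_sub_pi_div_two, cos_two_mul, sin_two_mul, tan_eq_sin_div_cos]
  rcases eq_or_ne (sin a) 0 with h | h
  · simp [h]
  · rw [cos_sq']
    field_simp
    ring

theorem one_add_sin_pos_of_cos_pos {x : ℝ} (hx : 0 < cos x) : 0 < 1 + sin x := by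
  nlinarith [sin_sq_add_cos_sq x, neg_one_le_sin x]

noncomputable def invGudermannian (x : ℝ) : ℝ := log (tan (x / 2 + π / 4))

section InvGudermannian

variable {x : ℝ}

theorem exp_invGudermannian (hx : 0 < cos x) :
    exp (invGudermannian x) = (1 + sin x) / cos x := by
  rw [invGudermannian, tan_div_two_add_pi_div_four,
    exp_log (div_pos (one_add_sin_pos_of_cos_pos hx) hx)]

theorem sinh_invGudermannian (hx : 0 < cos x) : sinh (invGudermannian x) = tan x := by
  have h := (one_add_sin_pos_of_cos_pos hx).ne'
  rw [sinh_eq, exp_neg, exp_invGudermannian hx, tan_eq_sin_div_cos]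
  field_simp
  linear_combination -sin_sq_add_cos_sq x

theorem cosh_invGudermannian (hx : 0 < cos x) : cosh (invGudermannian x) = (cos x)⁻¹ := by
  have h := (one_add_sin_pos_of_cos_pos hx).ne'
  rw [cosh_eq, exp_neg, exp_invGudermannian hx]
  field_simp
  linear_combination sin_sq_add_cos_sq x

theorem invGudermannian_pos (hx : x ∈ Set.Ioo 0 (π / 2)) : 0 < invGudermannian x := by
  rw [← sinh_pos_iff, sinh_invGudermannian (cos_pos_of_mem_Ioo ⟨by linarith [hx.1, pi_pos], hx.2⟩)]
  exact tan_pos_of_pos_of_lt_pi_div_two hx.1 hx.2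

theorem hasDerivAt_invGudermannian (hx : 0 < cos x) :
    HasDerivAt invGudermannian (cos x)⁻¹ x := by
  have h := one_add_sin_pos_of_cos_pos hx
  have hlog : HasDerivAt (fun y => log ((1 + sin y) / cos y)) _ x :=
    (((hasDerivAt_sin x).const_add 1).fun_div (hasDerivAt_cos x) hx.ne').log
      (div_pos h hx).ne'
  convert hlog using 1
  · ext y
    rw [invGudermannian, tan_div_two_add_pi_div_four]
  · field_simp
    linear_combination -sin_sq_add_cos_sq x

end InvGudermannian

section SecantCubeIntegral

variable {x : ℝ}

theorem hasDerivAt_tan_of_cos_ne_zero (hx : cos x ≠ 0) : HasDerivAt tan ((cos x)⁻¹ ^ 2) x := by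
  simpa only [one_div, inv_pow] using hasDerivAt_tan hx

theorem hasDerivAt_inv_cos (hx : cos x ≠ 0) :
    HasDerivAt (fun y => (cos y)⁻¹) (tan x * (cos x)⁻¹) x := by
  refine ((hasDerivAt_cos x).fun_inv hx).congr_deriv ?_
  rw [tan_eq_sin_div_cos]
  field_simp

theorem hasDerivAt_invGudermannian_add_tan_div_cos (hx : 0 < cos x) :
    HasDerivAt (fun y => invGudermannian y + tan y / cos y) (2 * (cos x)⁻¹ ^ 3) x := by
  refine ((hasDerivAt_invGudermannian hx).add
    ((hasDerivAt_tan_of_cos_ne_zero hx.ne').fun_div (hasDerivAt_cos x) hx.ne')).congr_deriv ?_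
  rw [tan_eq_sin_div_cos]
  field_simp
  linear_combination sin_sq_add_cos_sq x

-- `T`, `S`, `D` stand for `tan`, `sec` and `x ↦ ∫_{-x}^{x} sec³`.
variable {T S D : ℝ → ℝ}

theorem hasDerivAt_cube_div_sq (hT : HasDerivAt T (S x ^ 2) x)
    (hD : HasDerivAt D (2 * S x ^ 3) x) (hD0 : D x ≠ 0) :
    HasDerivAt (fun y => T y ^ 3 / D y ^ 2)
      (3 * T x ^ 2 * S x ^ 2 / D x ^ 2 - 4 * T x ^ 3 * S x ^ 3 / D x ^ 3) x := by
  refine ((hT.fun_pow 3).fun_div (hD.fun_pow 2) (pow_ne_zero 2 hD0)).congr_deriv ?_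
  field_simp
  ring

theorem hasDerivAt_deriv_cube_div_sq (hT : HasDerivAt T (S x ^ 2) x)
    (hS : HasDerivAt S (T x * S x) x) (hD : HasDerivAt D (2 * S x ^ 3) x) (hD0 : D x ≠ 0) :
    HasDerivAt (fun y => 3 * T y ^ 2 * S y ^ 2 / D y ^ 2 - 4 * T y ^ 3 * S y ^ 3 / D y ^ 3)
      (6 * T x * S x ^ 2 *
        ((D x - 2 * T x * S x) * ((S x ^ 2 + T x ^ 2) * D x - 2 * T x * S x ^ 3)) / D x ^ 4) x := by
  have h₂ := (((hT.fun_pow 2).const_mul 3).fun_mul (hS.fun_pow 2)).fun_div (hD.fun_pow 2)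
    (pow_ne_zero 2 hD0)
  have h₃ := (((hT.fun_pow 3).const_mul 4).fun_mul (hS.fun_pow 3)).fun_div (hD.fun_pow 3)
    (pow_ne_zero 3 hD0)
  refine (h₂.fun_sub h₃).congr_deriv ?_
  field_simp
  ring

end SecantCubeIntegral

theorem deriv2_formula_sinh_cosh_neg {t : ℝ} (ht : 0 < t) :
    6 * sinh t * cosh t ^ 2 *
      ((t + sinh t * cosh t - 2 * sinh t * cosh t) *
        ((cosh t ^ 2 + sinh t ^ 2) * (t + sinh t * cosh t) - 2 * sinh t * cosh t ^ 3)) /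
      (t + sinh t * cosh t) ^ 4 < 0 := by
  have h₁ : t + sinh t * cosh t - 2 * sinh t * cosh t < 0 := by
    have := self_lt_sinh_iff.2 (mul_pos two_pos ht)
    rw [sinh_two_mul] at this
    linarith
  have h₂ : 0 < (cosh t ^ 2 + sinh t ^ 2) * (t + sinh t * cosh t) - 2 * sinh t * cosh t ^ 3 := by
    have := sinh_lt_mul_cosh (mul_pos two_pos ht)
    rw [sinh_two_mul, cosh_two_mul] at this
    linear_combination this / 2 + sinh t * cosh t * cosh_sq_sub_sinh_sq t
  exact div_neg_of_neg_of_pos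
    (mul_neg_of_pos_of_neg (by positivity) (mul_neg_of_neg_of_pos h₁ h₂)) (by positivity)

theorem stmt_2 :
    StrictConcaveOn ℝ (Set.Ioo 0 (π/2))
      (fun x => tan x ^ 3 / (log (tan (x/2 + π/4)) + tan x / cos x) ^ 2) := by
  change StrictConcaveOn ℝ _ fun x => tan x ^ 3 / (invGudermannian x + tan x / cos x) ^ 2
  have hcos : ∀ x ∈ Set.Ioo 0 (π / 2), 0 < cos x := fun x hx =>
    cos_pos_of_mem_Ioo ⟨by linarith [hx.1, pi_pos], hx.2⟩
  have hD : ∀ x ∈ Set.Ioo 0 (π / 2), invGudermannian x + tan x / cos x ≠ 0 := fun x hx =>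
    (add_pos (invGudermannian_pos hx)
      (div_pos (tan_pos_of_pos_of_lt_pi_div_two hx.1 hx.2) (hcos x hx))).ne'
  refine strictConcaveOn_of_hasDerivAt2_neg (convex_Ioo _ _) isOpen_Ioo
    (fun x hx => hasDerivAt_cube_div_sq (hasDerivAt_tan_of_cos_ne_zero (hcos x hx).ne')
      (hasDerivAt_invGudermannian_add_tan_div_cos (hcos x hx)) (hD x hx))
    (fun x hx => hasDerivAt_deriv_cube_div_sq (hasDerivAt_tan_of_cos_ne_zero (hcos x hx).ne')
      (hasDerivAt_inv_cos (hcos x hx).ne') (hasDerivAt_invGudermannian_add_tan_div_cos (hcos x hx))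
      (hD x hx)) fun x hx => ?_
  rw [div_eq_mul_inv (tan x), ← sinh_invGudermannian (hcos x hx),
    ← cosh_invGudermannian (hcos x hx)]
  exact deriv2_formula_sinh_cosh_neg (invGudermannian_pos hx)
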